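/- arXiv:2304.03976 — 2 statements merged into one kernel-verified Lean document; each statement's English description precedes it below -/
import Mathlib

section
/- Reducedness within the ∗-families: The sets R(BCC_l^{(1)∗_1}) = (R(BCC_l)_s + ℤa) ∪ (R(BCC_l)_m + ℤa) ∪ (R(BC_l)_l + L_{1,1}) and R(C^∨BC_l^{(4)∗_1}) = (R(BC_l)_s + L_{1,1}) ∪ (R(C^∨BC_l)_m + 2ℤa) ∪ (R(C^∨BC_l)_l + 4ℤa) are reduced (for no root α is 2α a root), whereas the four sets R(BCC_l^{(1)∗_0}), R(BCC_l^{(1)∗_{0'}}), R(C^∨BC_l^{(4)∗_0}), R(C^∨BC_l^{(4)∗_{0'}}), obtained by replacing L_{1,1} by L_{0,0} or L_{0,1}, are non-reduced. -/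
open Pointwise

noncomputable section

/-- The ambient space `F = ℝ^{l+2}`, with coordinates `0,…,l-1` for the finite part
and coordinates `l, l+1` corresponding to the radical vectors `a, b`. -/
abbrev V (l : ℕ) : Type := Fin (l + 2) → ℝ

/-- The orthonormal vectors `ε_i`. -/
def εv (l : ℕ) (i : Fin l) : V l := Pi.single (Fin.castAdd 2 i) 1

/-- The radical vector `a`. -/
def av (l : ℕ) : V l := Pi.single (Fin.natAdd l (0 : Fin 2)) 1

/-- The radical vector `b`. -/
def bv (l : ℕ) : V l := Pi.single (Fin.natAdd l (1 : Fin 2)) 1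

/-- The positive semi-definite symmetric bilinear form `I` of signature `(l,2,0)`,
with radical `ℝa + ℝb`. -/
def Iform (l : ℕ) (x y : V l) : ℝ :=
  ∑ i : Fin l, x (Fin.castAdd 2 i) * y (Fin.castAdd 2 i)

/-- Short roots of the finite root system `BC_l`. -/
def BCs (l : ℕ) : Set (V l) := ⋃ i : Fin l, {εv l i, -εv l i}

/-- Middle-length roots of the finite root system `BC_l`. -/
def BCm (l : ℕ) : Set (V l) :=
  ⋃ (i : Fin l) (j : Fin l) (_ : i ≠ j),
    {εv l i + εv l j, εv l i - εv l j, -εv l i - εv l j}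

/-- Long roots of the finite root system `BC_l`. -/
def BCl (l : ℕ) : Set (V l) := ⋃ i : Fin l, {(2 : ℝ) • εv l i, -((2 : ℝ) • εv l i)}

/-- The finite root system `BC_l`. -/
def BCfull (l : ℕ) : Set (V l) := BCs l ∪ BCm l ∪ BCl l

/-- The subset `(kℤ)v` of `F`. -/
def Zv (l : ℕ) (k : ℤ) (v : V l) : Set (V l) := {x | ∃ n : ℤ, x = ((k * n : ℤ) : ℝ) • v}

/-- The subset `(kℤ)a`. -/
def Za (l : ℕ) (k : ℤ) : Set (V l) := Zv l k (av l)

/-- The subset `(kℤ)b`. -/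
def Zb (l : ℕ) (k : ℤ) : Set (V l) := Zv l k (bv l)

/-- The subset `(1+2ℤ)a`. -/
def oddZa (l : ℕ) : Set (V l) := {x | ∃ n : ℤ, x = ((1 + 2 * n : ℤ) : ℝ) • av l}

/-- The subset `L_{i,j}^{s1,s2} = {s2·m·a + s1·n·b : (m-i)(n-j) ≡ 0 mod 2}`;
`L_{i,j} = Lset l i j 1 1`. -/
def Lset (l : ℕ) (i j s1 s2 : ℤ) : Set (V l) :=
  {x | ∃ m n : ℤ, (2 : ℤ) ∣ ((m - i) * (n - j)) ∧
    x = ((s2 * m : ℤ) : ℝ) • av l + ((s1 * n : ℤ) : ℝ) • bv l}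

/-- The subset `{ma + 2nb : m ≡ n mod 2}` occurring in the ◇-type system. -/
def diaL (l : ℕ) : Set (V l) :=
  {x | ∃ m n : ℤ, (2 : ℤ) ∣ (m - n) ∧ x = ((m : ℤ) : ℝ) • av l + ((2 * n : ℤ) : ℝ) • bv l}

/-- The four types of non-reduced affine root systems. -/
inductive AffType | BCC | CvBC | BBv | CvC

/-- First tier number: the multiplier of `ℤb` on the middle part. -/
def tfm : AffType → ℤ | .BCC => 1 | .CvBC => 2 | .BBv => 1 | .CvC => 2

/-- The multiplier of `ℤb` on the long part. -/
def tfl : AffType → ℤ | .BCC => 1 | .CvBC => 4 | .BBv => 2 | .CvC => 2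

/-- Short part of the affine root system `R(X_l)`. -/
def AffS (l : ℕ) (_X : AffType) : Set (V l) := BCs l + Zb l 1

/-- Middle part of the affine root system `R(X_l)`. -/
def AffM (l : ℕ) (X : AffType) : Set (V l) := BCm l + Zb l (tfm X)

/-- Long part of the affine root system `R(X_l)`. -/
def AffL (l : ℕ) (X : AffType) : Set (V l) := BCl l + Zb l (tfl X)

/-- The affine root system `R(X_l)` for `X ∈ {BCC, C^∨BC, BB^∨, C^∨C}`. -/
def Aff (l : ℕ) (X : AffType) : Set (V l) := AffS l X ∪ AffM l X ∪ AffL l X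

/-- The reduced classical types `BC_l^{(1,2)}, BC_l^{(4,2)}, BC_l^{(2,2)σ}(1), BC_l^{(2,2)σ}(2)`
(for `X = BCC, C^∨BC, BB^∨, C^∨C` respectively). -/
def redClassical (l : ℕ) (X : AffType) : Set (V l) :=
  (AffS l X + Za l 1) ∪ (AffM l X + Za l 1) ∪ (AffL l X + oddZa l)

/-- `R(BC_l^{(1,1)∗})`. -/
def RBC11star (l : ℕ) : Set (V l) :=
  (AffS l .BCC + Za l 1) ∪ (AffM l .BCC + Za l 1) ∪ (BCl l + Lset l 1 1 1 1)

/-- `R(BC_l^{(4,4)∗})`. -/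
def RBC44star (l : ℕ) : Set (V l) :=
  (BCs l + Lset l 1 1 1 1) ∪ (AffM l .CvBC + Za l 2) ∪ (AffL l .CvBC + Za l 4)

/-- `R(X_l^{(1)})`. -/
def E1 (l : ℕ) (X : AffType) : Set (V l) := Aff l X + Za l 1

/-- `R(X_l^{(2)}(i))`. -/
def E2 (l : ℕ) (X : AffType) (i : ℤ) : Set (V l) :=
  (AffS l X + Za l 1) ∪ (AffM l X + Za l i) ∪ (AffL l X + Za l 2)

/-- `R(X_l^{(4)})`. -/
def E4 (l : ℕ) (X : AffType) : Set (V l) :=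
  (AffS l X + Za l 1) ∪ (AffM l X + Za l 2) ∪ (AffL l X + Za l 4)

/-- `R(BCC_l^{(1)∗})`-type systems: `BCC1star l 0 0 = R(BCC_l^{(1)∗_0})`,
`BCC1star l 0 1 = R(BCC_l^{(1)∗_{0'}})`, `BCC1star l 1 1 = R(BCC_l^{(1)∗_1}) = R(BC_l^{(1,1)∗})`. -/
def BCC1star (l : ℕ) (i j : ℤ) : Set (V l) :=
  (AffS l .BCC + Za l 1) ∪ (AffM l .BCC + Za l 1) ∪ (BCl l + Lset l i j 1 1)

/-- `R(BCC_l^{(2)∗_p})`. -/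
def BCC2star (l : ℕ) (p : ℤ) : Set (V l) :=
  (AffS l .BCC + Za l 1) ∪ (AffM l .BCC + Za l 2) ∪ (BCl l + Lset l p p 1 2)

/-- `R(C^∨BC_l^{(2)∗_p})`. -/
def CvBC2star (l : ℕ) (p : ℤ) : Set (V l) :=
  (BCs l + Lset l p p 1 1) ∪ (AffM l .CvBC + Za l 2) ∪ (AffL l .CvBC + Za l 2)

/-- `R(C^∨BC_l^{(4)∗})`-type systems: `CvBC4star l 0 0 = R(C^∨BC_l^{(4)∗_0})`,
`CvBC4star l 0 1 = R(C^∨BC_l^{(4)∗_{0'}})`, `CvBC4star l 1 1 = R(C^∨BC_l^{(4)∗_1}) = R(BC_l^{(4,4)∗})`. -/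
def CvBC4star (l : ℕ) (i j : ℤ) : Set (V l) :=
  (BCs l + Lset l i j 1 1) ∪ (AffM l .CvBC + Za l 2) ∪ (AffL l .CvBC + Za l 4)

/-- `R(BB_2^{∨(2)∗})` (its defining pattern, written for general `l`). -/
def BB2star (l : ℕ) : Set (V l) :=
  (BCs l + Za l 1 + Zb l 1) ∪ (BCm l + Lset l 0 0 1 1) ∪ (BCl l + Za l 2 + Zb l 2)

/-- `R(C^∨C_l^{(1)∗_p})`. -/
def CvC1star (l : ℕ) (p : ℤ) : Set (V l) :=
  (AffS l .CvC + Za l 1) ∪ (AffM l .CvC + Za l 1) ∪ (BCl l + Lset l p p 2 1)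

/-- `R(C^∨C_l^{(2)∗})`-type systems: `CvC2star l 0 0 = R(C^∨C_l^{(2)∗_0})`,
`CvC2star l 1 1 = R(C^∨C_l^{(2)∗_1})`, `CvC2star l 1 0 = R(C^∨C_l^{(2)∗_{1'}})`. -/
def CvC2star (l : ℕ) (i j : ℤ) : Set (V l) :=
  (BCs l + Lset l 0 0 1 1) ∪ (AffM l .CvC + Za l 2) ∪ (BCl l + Lset l i j 2 2)

/-- `R(C^∨C_l^{(2)∗_s})`. -/
def CvC2starS (l : ℕ) : Set (V l) :=
  (BCs l + Lset l 0 0 1 1) ∪ (AffM l .CvC + Za l 2) ∪ (AffL l .CvC + Za l 2)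

/-- `R(C^∨C_l^{(2)∗_l})`. -/
def CvC2starL (l : ℕ) : Set (V l) :=
  (AffS l .CvC + Za l 1) ∪ (AffM l .CvC + Za l 2) ∪ (BCl l + Lset l 0 0 2 2)

/-- `R(C^∨C_l^{(4)∗_p})`. -/
def CvC4star (l : ℕ) (p : ℤ) : Set (V l) :=
  (BCs l + Lset l p p 1 1) ∪ (AffM l .CvC + Za l 2) ∪ (AffL l .CvC + Za l 4)

/-- `R(C^∨C_l^{(2)◇})`. -/
def CvC2dia (l : ℕ) : Set (V l) :=
  (AffS l .CvC + Za l 1) ∪ (AffM l .CvC + Za l 1) ∪ (BCl l + diaL l)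

/-- The reflection `w_α`. -/
def reflV (l : ℕ) (α x : V l) : V l := x - (2 * Iform l x α / Iform l α α) • α

/-- A generalized root system in `(F, I)`; since `I` has signature `(l,2,0)`, this is
exactly an elliptic root system. -/
structure IsERS (l : ℕ) (R : Set (V l)) : Prop where
  /-- `R` is discrete. -/
  discrete : ∀ x ∈ R, ∃ ε > 0, ∀ y ∈ R, ‖x - y‖ < ε → y = x
  /-- The root lattice `Q(R)` is full in `F`. -/
  spans : Submodule.span ℝ R = ⊤
  /-- roots are non-isotropic. -/
  nonisotropic : ∀ α ∈ R, Iform l α α ≠ 0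
  /-- integrality: `2 I(α,β)/I(α,α) ∈ ℤ`. -/
  integral : ∀ α ∈ R, ∀ β ∈ R, ∃ n : ℤ, 2 * Iform l α β = (n : ℝ) * Iform l α α
  /-- each reflection `w_α` maps `R` onto `R`. -/
  reflects : ∀ α ∈ R, reflV l α '' R = R
  /-- irreducibility. -/
  irred : ∀ R1 R2 : Set (V l), R1 ∪ R2 = R →
    (∀ x ∈ R1, ∀ y ∈ R2, Iform l x y = 0) → R1 = ∅ ∨ R2 = ∅

/-- `R` is reduced. -/
def IsReducedRS (l : ℕ) (R : Set (V l)) : Prop := ∀ α ∈ R, (2 : ℝ) • α ∉ R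

/-- `R` is non-reduced. -/
def IsNonReducedRS (l : ℕ) (R : Set (V l)) : Prop := ∃ α ∈ R, (2 : ℝ) • α ∈ R

/-- The radical `ℝa + ℝb` of `I`. -/
def radSpan (l : ℕ) : Submodule ℝ (V l) := Submodule.span ℝ {av l, bv l}

/-- The marking line `G = ℝa`. -/
def Ga (l : ℕ) : Submodule ℝ (V l) := Submodule.span ℝ {av l}

/-- `G` is a marking of `R`: a one-dimensional subspace of `rad(I)` such that
`G ∩ Q(R)` is full in `G`. -/
def IsMarking (l : ℕ) (R : Set (V l)) (G : Submodule ℝ (V l)) : Prop :=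
  G ≤ radSpan l ∧ Module.finrank ℝ G = 1 ∧
    ∃ v : V l, v ≠ 0 ∧ v ∈ G ∧ v ∈ AddSubgroup.closure R

/-- `φ` rescales the form `I` by the factor `c`. -/
def IsSimilarity (l : ℕ) (φ : V l ≃ₗ[ℝ] V l) (c : ℝ) : Prop :=
  ∀ x y : V l, Iform l (φ x) (φ y) = c * Iform l x y

/-- Isomorphism of root systems in `(F, I)`. -/
def IsoRS (l : ℕ) (R R' : Set (V l)) : Prop :=
  ∃ (φ : V l ≃ₗ[ℝ] V l) (c : ℝ), 0 < c ∧ IsSimilarity l φ c ∧ φ '' R = R'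

/-- Isomorphism of marked root systems (with marking `ℝa` on both sides). -/
def IsoRSa (l : ℕ) (R R' : Set (V l)) : Prop :=
  ∃ (φ : V l ≃ₗ[ℝ] V l) (c : ℝ), 0 < c ∧ IsSimilarity l φ c ∧
    φ '' (Ga l : Set (V l)) = (Ga l : Set (V l)) ∧ φ '' R = R'

/-- The quotient `R/G` (image of `R` in `F/G`) is non-reduced. -/
def QuotNonReduced (l : ℕ) (R : Set (V l)) (G : Submodule ℝ (V l)) : Prop :=
  ∃ α ∈ R, ∃ β ∈ R, G.mkQ β = (2 : ℝ) • G.mkQ α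

/-- The quotient `R/G` is isomorphic, as an affine root system, to the affine root system
`X ⊆ span(ε_1,…,ε_l,b)`: encoded via `p = ψ ∘ (F → F/G)` for an isomorphism
`ψ : F/G ≅ span(ε_1,…,ε_l,b)` with `Ī(u,v) = c·I(ψu,ψv)` and `ψ(R/G) = X`. -/
def QuotIsType (l : ℕ) (R : Set (V l)) (G : Submodule ℝ (V l)) (X : Set (V l)) : Prop :=
  ∃ (p : V l →ₗ[ℝ] V l) (c : ℝ), 0 < c ∧
    LinearMap.ker p = G ∧
    LinearMap.range p = Submodule.span ℝ (Set.range (εv l) ∪ {bv l}) ∧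
    (∀ x y : V l, Iform l x y = c * Iform l (p x) (p y)) ∧
    p '' R = X

end

/-! Since `I` vanishes on the radical `ℝa + ℝb`, the value `I(α, α)` of a root is `1`, `2` or `4`
according as `α` lies in the short, middle or long part; as `I(2α, 2α) = 4 I(α, α)`, a root `α` with
`2α` a root must be short and `2α` long. Comparing the `a`- and `b`-coordinates then gives a
contradiction in the two `∗₁` systems: in `BCC_l^{(1)∗_1}` the radical part of `2α` is
`2ma + 2nb ∈ L_{1,1}`, but `(2m - 1)(2n - 1)` is odd; in `C^∨BC_l^{(4)∗_1}` the radical part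
`ma + nb ∈ L_{1,1}` of `α` doubles into `4ℤa + 4ℤb`, so `m, n` are even and `(m - 1)(n - 1)` is odd.
In the other four systems `0 ∈ L`, so `ε_1` and `2ε_1` are both roots. -/

namespace StarFamilies

variable {l : ℕ}

@[simp]
lemma εv_castAdd (i k : Fin l) : εv l i (Fin.castAdd 2 k) = if k = i then 1 else 0 := by
  simp [εv, Pi.single_apply, Fin.ext_iff]

@[simp]
lemma εv_natAdd (i : Fin l) (k : Fin 2) : εv l i (Fin.natAdd l k) = 0 := by
  simp [εv, Pi.single_apply, Fin.ext_iff]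
  omega

@[simp]
lemma av_castAdd (k : Fin l) : av l (Fin.castAdd 2 k) = 0 := by
  simp [av, Pi.single_apply, Fin.ext_iff]
  omega

@[simp]
lemma bv_castAdd (k : Fin l) : bv l (Fin.castAdd 2 k) = 0 := by
  simp [bv, Pi.single_apply, Fin.ext_iff]
  omega

@[simp]
lemma av_natAdd_zero : av l (Fin.natAdd l 0) = 1 := by simp [av]

@[simp]
lemma av_natAdd_one : av l (Fin.natAdd l 1) = 0 := by simp [av, Fin.ext_iff]

@[simp]
lemma bv_natAdd_zero : bv l (Fin.natAdd l 0) = 0 := by simp [bv, Fin.ext_iff]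

@[simp]
lemma bv_natAdd_one : bv l (Fin.natAdd l 1) = 1 := by simp [bv]

lemma Iform_εv (i j : Fin l) : Iform l (εv l i) (εv l j) = if i = j then 1 else 0 := by
  simp [Iform, eq_comm]

lemma Iform_smul_self (c : ℝ) (x : V l) : Iform l (c • x) (c • x) = c ^ 2 * Iform l x x := by
  simp only [Iform, Pi.smul_apply, smul_eq_mul, Finset.mul_sum]
  exact Finset.sum_congr rfl fun _ _ => by ring

lemma Iform_neg_self (x : V l) : Iform l (-x) (-x) = Iform l x x := by
  simp [Iform]

lemma Iform_add_self (x y : V l) :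
    Iform l (x + y) (x + y) = Iform l x x + 2 * Iform l x y + Iform l y y := by
  simp only [Iform, Pi.add_apply, Finset.mul_sum, ← Finset.sum_add_distrib]
  exact Finset.sum_congr rfl fun _ _ => by ring

lemma Iform_sub_self (x y : V l) :
    Iform l (x - y) (x - y) = Iform l x x - 2 * Iform l x y + Iform l y y := by
  simp only [Iform, Pi.sub_apply, Finset.mul_sum, ← Finset.sum_add_distrib,
    ← Finset.sum_sub_distrib]
  exact Finset.sum_congr rfl fun _ _ => by ring

lemma Iform_add_radical_self (x z : V l) (hz : ∀ k : Fin l, z (Fin.castAdd 2 k) = 0) :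
    Iform l (x + z) (x + z) = Iform l x x := by
  simp [Iform, hz]

lemma Iform_self_of_mem_BCs {v : V l} (hv : v ∈ BCs l) : Iform l v v = 1 := by
  simp only [BCs, Set.mem_iUnion, Set.mem_insert_iff, Set.mem_singleton_iff] at hv
  obtain ⟨i, rfl | rfl⟩ := hv <;> simp [Iform_neg_self, Iform_εv]

lemma Iform_self_of_mem_BCm {v : V l} (hv : v ∈ BCm l) : Iform l v v = 2 := by
  simp only [BCm, Set.mem_iUnion, Set.mem_insert_iff, Set.mem_singleton_iff] at hv
  obtain ⟨i, j, hij, rfl | rfl | rfl⟩ := hv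
  · simp [Iform_add_self, Iform_εv, hij]; norm_num
  · simp [Iform_sub_self, Iform_εv, hij]; norm_num
  · rw [← neg_add', Iform_neg_self]
    simp [Iform_add_self, Iform_εv, hij]; norm_num

lemma Iform_self_of_mem_BCl {v : V l} (hv : v ∈ BCl l) : Iform l v v = 4 := by
  simp only [BCl, Set.mem_iUnion, Set.mem_insert_iff, Set.mem_singleton_iff] at hv
  obtain ⟨i, rfl | rfl⟩ := hv <;> simp [Iform_neg_self, Iform_smul_self, Iform_εv] <;> norm_num

lemma Iform_self_of_mem_add {A L : Set (V l)} {c : ℝ} (hA : ∀ v ∈ A, Iform l v v = c)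
    (hL : ∀ z ∈ L, ∀ k : Fin l, z (Fin.castAdd 2 k) = 0) {x : V l} (hx : x ∈ A + L) :
    Iform l x x = c := by
  obtain ⟨v, hv, z, hz, rfl⟩ := hx
  rw [Iform_add_radical_self v z (hL z hz), hA v hv]

lemma castAdd_eq_zero_of_mem_Za {k : ℤ} : ∀ z ∈ Za l k, ∀ k' : Fin l, z (Fin.castAdd 2 k') = 0 := by
  rintro z ⟨n, rfl⟩ k'
  simp

lemma castAdd_eq_zero_of_mem_Zb {k : ℤ} : ∀ z ∈ Zb l k, ∀ k' : Fin l, z (Fin.castAdd 2 k') = 0 := by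
  rintro z ⟨n, rfl⟩ k'
  simp

lemma castAdd_eq_zero_of_mem_Lset {i j s1 s2 : ℤ} :
    ∀ z ∈ Lset l i j s1 s2, ∀ k' : Fin l, z (Fin.castAdd 2 k') = 0 := by
  rintro z ⟨m, n, -, rfl⟩ k'
  simp

lemma mem_short_and_two_smul_mem_long {S M L : Set (V l)} (hS : ∀ x ∈ S, Iform l x x = 1)
    (hM : ∀ x ∈ M, Iform l x x = 2) (hL : ∀ x ∈ L, Iform l x x = 4) {α : V l}
    (hα : α ∈ S ∪ M ∪ L) (h2α : (2 : ℝ) • α ∈ S ∪ M ∪ L) : α ∈ S ∧ (2 : ℝ) • α ∈ L := by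
  have graded : ∀ x ∈ S ∪ M ∪ L, Iform l x x = 1 ∨ Iform l x x = 2 ∨ Iform l x x = 4 := by
    rintro x ((hx | hx) | hx)
    exacts [Or.inl (hS x hx), Or.inr (Or.inl (hM x hx)), Or.inr (Or.inr (hL x hx))]
  have h2 : Iform l ((2 : ℝ) • α) ((2 : ℝ) • α) = 4 * Iform l α α := by
    rw [Iform_smul_self]; norm_num
  have hN : Iform l α α = 1 := by
    rcases graded α hα with h | h | h <;> rcases graded _ h2α with h' | h' | h' <;> linarith
  constructor
  · rcases hα with (h | h) | h
    · exact h
    · linarith [hM α h]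
    · linarith [hL α h]
  · rcases h2α with (h | h) | h
    · linarith [hS _ h]
    · linarith [hM _ h]
    · exact h

lemma natAdd_eq_zero_of_mem_BCs {v : V l} (hv : v ∈ BCs l) (k : Fin 2) :
    v (Fin.natAdd l k) = 0 := by
  simp only [BCs, Set.mem_iUnion, Set.mem_insert_iff, Set.mem_singleton_iff] at hv
  obtain ⟨i, rfl | rfl⟩ := hv <;> simp

lemma natAdd_eq_zero_of_mem_BCl {v : V l} (hv : v ∈ BCl l) (k : Fin 2) :
    v (Fin.natAdd l k) = 0 := by
  simp only [BCl, Set.mem_iUnion, Set.mem_insert_iff, Set.mem_singleton_iff] at hv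
  obtain ⟨i, rfl | rfl⟩ := hv <;> simp

lemma exists_radical_coords_of_mem_add_Zb_add_Za {A : Set (V l)}
    (hA : ∀ v ∈ A, ∀ k : Fin 2, v (Fin.natAdd l k) = 0) {k k' : ℤ} {x : V l}
    (hx : x ∈ A + Zb l k + Za l k') :
    ∃ m n : ℤ,
      x (Fin.natAdd l 0) = ((k' * m : ℤ) : ℝ) ∧ x (Fin.natAdd l 1) = ((k * n : ℤ) : ℝ) := by
  obtain ⟨_, ⟨v, hv, _, ⟨n, rfl⟩, rfl⟩, _, ⟨m, rfl⟩, rfl⟩ := hx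
  exact ⟨m, n, by simp [hA v hv], by simp [hA v hv]⟩

lemma exists_radical_coords_of_mem_add_Lset {A : Set (V l)}
    (hA : ∀ v ∈ A, ∀ k : Fin 2, v (Fin.natAdd l k) = 0) {i j s1 s2 : ℤ} {x : V l}
    (hx : x ∈ A + Lset l i j s1 s2) :
    ∃ m n : ℤ, 2 ∣ (m - i) * (n - j) ∧
      x (Fin.natAdd l 0) = ((s2 * m : ℤ) : ℝ) ∧ x (Fin.natAdd l 1) = ((s1 * n : ℤ) : ℝ) := by
  obtain ⟨v, hv, _, ⟨m, n, hmn, rfl⟩, rfl⟩ := hx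
  exact ⟨m, n, hmn, by simp [hA v hv], by simp [hA v hv]⟩

lemma not_two_dvd_two_mul_sub_one_mul (m n : ℤ) : ¬ 2 ∣ (2 * m - 1) * (2 * n - 1) := by
  rw [← even_iff_two_dvd, Int.not_even_iff_odd]
  exact Odd.mul ⟨m - 1, by ring⟩ ⟨n - 1, by ring⟩

theorem isReducedRS_BCC1star_one_one : IsReducedRS l (BCC1star l 1 1) := by
  intro α hα h2α
  obtain ⟨hαS, h2αL⟩ := mem_short_and_two_smul_mem_long
    (fun _ => Iform_self_of_mem_add
      (fun _ => Iform_self_of_mem_add (fun _ => Iform_self_of_mem_BCs) castAdd_eq_zero_of_mem_Zb)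
      castAdd_eq_zero_of_mem_Za)
    (fun _ => Iform_self_of_mem_add
      (fun _ => Iform_self_of_mem_add (fun _ => Iform_self_of_mem_BCm) castAdd_eq_zero_of_mem_Zb)
      castAdd_eq_zero_of_mem_Za)
    (fun _ => Iform_self_of_mem_add (fun _ => Iform_self_of_mem_BCl) castAdd_eq_zero_of_mem_Lset)
    hα h2α
  obtain ⟨m, n, hα_a, hα_b⟩ :=
    exists_radical_coords_of_mem_add_Zb_add_Za (fun _ => natAdd_eq_zero_of_mem_BCs) hαS
  obtain ⟨m', n', hdvd, h2α_a, h2α_b⟩ :=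
    exists_radical_coords_of_mem_add_Lset (fun _ => natAdd_eq_zero_of_mem_BCl) h2αL
  simp only [Pi.smul_apply, smul_eq_mul, hα_a, hα_b] at h2α_a h2α_b
  push_cast [one_mul] at h2α_a h2α_b
  obtain rfl : m' = 2 * m := by exact_mod_cast h2α_a.symm
  obtain rfl : n' = 2 * n := by exact_mod_cast h2α_b.symm
  exact not_two_dvd_two_mul_sub_one_mul m n hdvd

theorem isReducedRS_CvBC4star_one_one : IsReducedRS l (CvBC4star l 1 1) := by
  intro α hα h2α
  obtain ⟨hαS, h2αL⟩ := mem_short_and_two_smul_mem_long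
    (fun _ => Iform_self_of_mem_add (fun _ => Iform_self_of_mem_BCs) castAdd_eq_zero_of_mem_Lset)
    (fun _ => Iform_self_of_mem_add
      (fun _ => Iform_self_of_mem_add (fun _ => Iform_self_of_mem_BCm) castAdd_eq_zero_of_mem_Zb)
      castAdd_eq_zero_of_mem_Za)
    (fun _ => Iform_self_of_mem_add
      (fun _ => Iform_self_of_mem_add (fun _ => Iform_self_of_mem_BCl) castAdd_eq_zero_of_mem_Zb)
      castAdd_eq_zero_of_mem_Za)
    hα h2α
  obtain ⟨m, n, hdvd, hα_a, hα_b⟩ :=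
    exists_radical_coords_of_mem_add_Lset (fun _ => natAdd_eq_zero_of_mem_BCs) hαS
  obtain ⟨m', n', h2α_a, h2α_b⟩ :=
    exists_radical_coords_of_mem_add_Zb_add_Za (fun _ => natAdd_eq_zero_of_mem_BCl) h2αL
  simp only [Pi.smul_apply, smul_eq_mul, hα_a, hα_b, tfl] at h2α_a h2α_b
  push_cast [one_mul] at h2α_a h2α_b
  obtain rfl : m = 2 * m' := by exact_mod_cast (by linarith : (m : ℝ) = 2 * m')
  obtain rfl : n = 2 * n' := by exact_mod_cast (by linarith : (n : ℝ) = 2 * n')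
  exact not_two_dvd_two_mul_sub_one_mul m' n' hdvd

lemma zero_mem_Zv (k : ℤ) (v : V l) : (0 : V l) ∈ Zv l k v := ⟨0, by simp⟩

lemma zero_mem_Lset_zero (j s1 s2 : ℤ) : (0 : V l) ∈ Lset l 0 j s1 s2 := ⟨0, 0, by simp, by simp⟩

lemma εv_mem_BCs (i : Fin l) : εv l i ∈ BCs l :=
  Set.mem_iUnion.2 ⟨i, Or.inl rfl⟩

lemma two_smul_εv_mem_BCl (i : Fin l) : (2 : ℝ) • εv l i ∈ BCl l :=
  Set.mem_iUnion.2 ⟨i, Or.inl rfl⟩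

theorem isNonReducedRS_BCC1star_zero (i : Fin l) (j : ℤ) : IsNonReducedRS l (BCC1star l 0 j) :=
  ⟨εv l i, Or.inl (Or.inl (Set.subset_add_left _ (zero_mem_Zv 1 _)
      (Set.subset_add_left _ (zero_mem_Zv 1 _) (εv_mem_BCs i)))),
    Or.inr (Set.subset_add_left _ (zero_mem_Lset_zero j 1 1) (two_smul_εv_mem_BCl i))⟩

theorem isNonReducedRS_CvBC4star_zero (i : Fin l) (j : ℤ) : IsNonReducedRS l (CvBC4star l 0 j) :=
  ⟨εv l i, Or.inl (Or.inl (Set.subset_add_left _ (zero_mem_Lset_zero j 1 1) (εv_mem_BCs i))),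
    Or.inr (Set.subset_add_left _ (zero_mem_Zv 4 _)
      (Set.subset_add_left _ (zero_mem_Zv _ _) (two_smul_εv_mem_BCl i)))⟩

end StarFamilies

open StarFamilies

/-- **Reducedness within the ∗-families**: `BCC_l^{(1)∗_1}` and `C^∨BC_l^{(4)∗_1}` are
reduced, whereas `BCC_l^{(1)∗_0}, BCC_l^{(1)∗_{0'}}, C^∨BC_l^{(4)∗_0}, C^∨BC_l^{(4)∗_{0'}}`
are non-reduced. -/
theorem reducedness_in_star_families {l : ℕ} (hl : 1 ≤ l) :
    IsReducedRS l (BCC1star l 1 1) ∧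
    IsReducedRS l (CvBC4star l 1 1) ∧
    IsNonReducedRS l (BCC1star l 0 0) ∧
    IsNonReducedRS l (BCC1star l 0 1) ∧
    IsNonReducedRS l (CvBC4star l 0 0) ∧
    IsNonReducedRS l (CvBC4star l 0 1) :=
  let ε₁ : Fin l := ⟨0, hl⟩
  ⟨isReducedRS_BCC1star_one_one, isReducedRS_CvBC4star_one_one,
    isNonReducedRS_BCC1star_zero ε₁ 0, isNonReducedRS_BCC1star_zero ε₁ 1,
    isNonReducedRS_CvBC4star_zero ε₁ 0, isNonReducedRS_CvBC4star_zero ε₁ 1⟩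
end

section
/- Well-definedness of the isolated and ◇-type systems: (i) For l = 2, the set R(BB_2^{∨(2)∗}) = (R(BC_2)_s + ℤa + ℤb) ∪ (R(BC_2)_m + L_{0,0}) ∪ (R(BC_2)_l + 2ℤa + 2ℤb) is a non-reduced elliptic root system in (F,I) with marking ℝa whose quotient modulo ℝa is the image of R(BB_2^∨). (ii) For any l ≥ 1, the set R(C^∨C_l^{(2)◇}) = (R(C^∨C_l)_s + ℤa) ∪ (R(C^∨C_l)_m + ℤa) ∪ (R(BC_l)_l + {ma + 2nb : m,n ∈ ℤ, m ≡ n mod 2}) is a non-reduced elliptic root system in (F,I) with marking ℝa whose quotient modulo ℝa is the image of R(C^∨C_l). -/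
open Pointwise

/-!
Both systems have the form `(BCs + Lₛ) ∪ (BCm + Lₘ) ∪ (BCl + Lₗ)` with coefficient sets
`L_P ⊆ ℤa + ℤb` in the radical of `I`, so `w_{f+λ}(g + μ) = (g - k f) + (μ - k λ)`, where
`k = 2I(g,f)/I(f,f)` is a Cartan integer of `BC_l`. In `ℤ^l = ℤε₁ + ⋯ + ℤε_l` the short and middle
roots of `BC_l` are exactly the vectors of square norm `1` and `2`, and the long roots are twice the
short ones; hence the isometry `w_f` of `ℤ^l` preserves each of the three lengths. Closure under
reflections thus reduces to `L_P - k L_Q ⊆ L_P`, which is arithmetic in `ℤ²` once one knows which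
powers of `2` divide the Cartan integers between two given lengths (for `l = 2` also those between
two middle roots are even, which is where `BB_2^{∨(2)∗}` needs `l = 2`). Modulo `ℝa` only the
`b`-coefficients survive, which identifies the quotients.
-/

section IntegralVectors

variable {ι : Type*} [Fintype ι]

lemma dotProduct_self_nonneg {R : Type*} [Ring R] [LinearOrder R] [IsStrictOrderedRing R]
    (v : ι → R) : 0 ≤ v ⬝ᵥ v :=
  Finset.sum_nonneg fun i _ => mul_self_nonneg (v i)

lemma dotProduct_sub_smul_self {n m : ι → ℤ} {k : ℤ} (hk : 2 * (n ⬝ᵥ m) = k * (m ⬝ᵥ m)) :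
    (n - k • m) ⬝ᵥ (n - k • m) = n ⬝ᵥ n := by
  simp only [sub_dotProduct, dotProduct_sub, smul_dotProduct, dotProduct_smul, smul_eq_mul,
    dotProduct_comm m n]
  linear_combination (-k) * hk

lemma exists_ne_zero_of_dotProduct_self_ne_zero {n : ι → ℤ} (h : n ⬝ᵥ n ≠ 0) : ∃ i, n i ≠ 0 := by
  by_contra! h0
  exact h (by simp [show n = 0 from funext h0])

variable [DecidableEq ι]

lemma dotProduct_self_sub_single (n : ι → ℤ) (i : ι) :
    (n - Pi.single i (n i)) ⬝ᵥ (n - Pi.single i (n i)) = n ⬝ᵥ n - n i * n i := by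
  simp only [sub_dotProduct, dotProduct_sub, dotProduct_single, single_dotProduct,
    Pi.single_eq_same, Pi.sub_apply, sub_self]
  ring

lemma exists_eq_single_of_dotProduct_self_eq_one {n : ι → ℤ} (h : n ⬝ᵥ n = 1) :
    ∃ i, (n i = 1 ∨ n i = -1) ∧ n = Pi.single i (n i) := by
  obtain ⟨i, hi⟩ := exists_ne_zero_of_dotProduct_self_ne_zero (h ▸ one_ne_zero)
  have hrest := dotProduct_self_sub_single n i
  have hpos : 0 < n i * n i := mul_self_pos.mpr hi
  have hnonneg := dotProduct_self_nonneg (n - Pi.single i (n i))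
  refine ⟨i, mul_self_eq_one_iff.mp (by linarith), ?_⟩
  rw [← sub_eq_zero, ← dotProduct_self_eq_zero]
  linarith

lemma exists_eq_single_add_single_of_dotProduct_self_eq_two {n : ι → ℤ} (h : n ⬝ᵥ n = 2) :
    ∃ i j, i ≠ j ∧ (n i = 1 ∨ n i = -1) ∧ (n j = 1 ∨ n j = -1) ∧
      n = Pi.single i (n i) + Pi.single j (n j) := by
  obtain ⟨i, hi⟩ := exists_ne_zero_of_dotProduct_self_ne_zero (h ▸ two_ne_zero)
  have hrest := dotProduct_self_sub_single n i
  have hnonneg := dotProduct_self_nonneg (n - Pi.single i (n i))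
  have hni : n i = 1 ∨ n i = -1 := by
    have : n i ≤ 1 := by nlinarith
    have : -1 ≤ n i := by nlinarith
    omega
  have hsq : n i * n i = 1 := by rcases hni with h | h <;> simp [h]
  obtain ⟨j, hj, hr⟩ := exists_eq_single_of_dotProduct_self_eq_one (n := n - Pi.single i (n i))
    (by linarith)
  have hji : j ≠ i := by
    rintro rfl
    simp at hj
  simp only [Pi.sub_apply, Pi.single_eq_of_ne hji, sub_zero] at hj hr
  exact ⟨i, j, hji.symm, hni, hj, by rw [← hr]; abel⟩

lemma odd_of_mul_self_add_mul_self_eq_two {a b : ℤ} (h : a * a + b * b = 2) : Odd a := by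
  obtain ⟨ha0, ha1⟩ : -1 ≤ a ∧ a ≤ 1 := by constructor <;> nlinarith [mul_self_nonneg b]
  obtain ⟨hb0, hb1⟩ : -1 ≤ b ∧ b ≤ 1 := by constructor <;> nlinarith [mul_self_nonneg a]
  interval_cases a <;> interval_cases b <;> simp_all

lemma two_dvd_dotProduct_of_dotProduct_self_eq_two {n m : Fin 2 → ℤ} (hn : n ⬝ᵥ n = 2)
    (hm : m ⬝ᵥ m = 2) : 2 ∣ n ⬝ᵥ m := by
  simp only [dotProduct, Fin.sum_univ_two] at hn hm ⊢
  have hn0 := odd_of_mul_self_add_mul_self_eq_two hn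
  have hn1 := odd_of_mul_self_add_mul_self_eq_two ((add_comm _ _).trans hn)
  have hm0 := odd_of_mul_self_add_mul_self_eq_two hm
  have hm1 := odd_of_mul_self_add_mul_self_eq_two ((add_comm _ _).trans hm)
  exact even_iff_two_dvd.mp ((hn0.mul hm0).add_odd (hn1.mul hm1))

end IntegralVectors

section

variable {l : ℕ}

lemma εv_castAdd (i j : Fin l) : εv l i (Fin.castAdd 2 j) = if j = i then 1 else 0 := by
  simp [εv, Pi.single_apply]

lemma av_castAdd (i : Fin l) : av l (Fin.castAdd 2 i) = 0 := by
  simp [av, Pi.single_apply, Fin.ext_iff]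
  omega

lemma bv_castAdd (i : Fin l) : bv l (Fin.castAdd 2 i) = 0 := by
  simp [bv, Pi.single_apply, Fin.ext_iff]
  omega

lemma Iform_comm (x y : V l) : Iform l x y = Iform l y x := by
  simp only [Iform, mul_comm]

lemma Iform_εv_right (x : V l) (i : Fin l) : Iform l x (εv l i) = x (Fin.castAdd 2 i) := by
  simp [Iform, εv_castAdd]

lemma Iform_sub_smul_left (x y : V l) (c : ℝ) :
    Iform l (x - c • y) y = Iform l x y - c * Iform l y y := by
  simp only [Iform, Pi.sub_apply, Pi.smul_apply, smul_eq_mul, sub_mul, Finset.sum_sub_distrib,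
    Finset.mul_sum, mul_assoc]

lemma reflV_reflV {α : V l} (hα : Iform l α α ≠ 0) (x : V l) :
    reflV l α (reflV l α x) = x := by
  simp only [reflV, Iform_sub_smul_left]
  rw [show 2 * (Iform l x α - 2 * Iform l x α / Iform l α α * Iform l α α) / Iform l α α
      = -(2 * Iform l x α / Iform l α α) by field_simp; ring]
  module

lemma reflV_image_eq_of_mapsTo {R : Set (V l)} {α : V l} (hα : Iform l α α ≠ 0)
    (hR : Set.MapsTo (reflV l α) R R) : reflV l α '' R = R :=
  hR.image_subset.antisymm fun x hx => ⟨reflV l α x, hR hx, reflV_reflV hα x⟩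

def embFin (l : ℕ) : (Fin l → ℤ) →ₗ[ℤ] V l := Fintype.linearCombination ℤ (εv l)

def embRad (l : ℕ) : ℤ × ℤ →+ V l :=
  (zmultiplesHom (V l) (av l)).coprod (zmultiplesHom (V l) (bv l))

lemma embFin_apply (n : Fin l → ℤ) : embFin l n = ∑ i, n i • εv l i :=
  Fintype.linearCombination_apply ℤ _ n

lemma embRad_apply (p : ℤ × ℤ) : embRad l p = (p.1 : ℝ) • av l + (p.2 : ℝ) • bv l := by
  simp [embRad, Int.cast_smul_eq_zsmul]

lemma embFin_castAdd (n : Fin l → ℤ) (i : Fin l) : embFin l n (Fin.castAdd 2 i) = n i := by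
  simp [embFin_apply, Finset.sum_apply, εv_castAdd]

lemma embRad_castAdd (p : ℤ × ℤ) (i : Fin l) : embRad l p (Fin.castAdd 2 i) = 0 := by
  simp [embRad_apply, av_castAdd, bv_castAdd]

lemma embFin_single (i : Fin l) (s : ℤ) : embFin l (Pi.single i s) = s • εv l i := by
  simp [embFin_apply, Pi.single_apply]

lemma Iform_embFin_add_embRad (n m : Fin l → ℤ) (p q : ℤ × ℤ) :
    Iform l (embFin l n + embRad l p) (embFin l m + embRad l q) = ((n ⬝ᵥ m : ℤ) : ℝ) := by
  simp [Iform, embFin_castAdd, embRad_castAdd, dotProduct]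

lemma reflV_embFin_add_embRad {n m : Fin l → ℤ} {p q : ℤ × ℤ} {k : ℤ} (hm : m ⬝ᵥ m ≠ 0)
    (hk : 2 * (n ⬝ᵥ m) = k * (m ⬝ᵥ m)) :
    reflV l (embFin l m + embRad l q) (embFin l n + embRad l p) =
      embFin l (n - k • m) + embRad l (p - k • q) := by
  have hcoeff : 2 * ((n ⬝ᵥ m : ℤ) : ℝ) / ((m ⬝ᵥ m : ℤ) : ℝ) = k := by
    rw [div_eq_iff (by exact_mod_cast hm)]
    exact_mod_cast hk
  rw [reflV, Iform_embFin_add_embRad, Iform_embFin_add_embRad, hcoeff, map_sub, map_sub,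
    map_zsmul, map_zsmul, Int.cast_smul_eq_zsmul, smul_add]
  abel

inductive BCPart | short | middle | long

namespace BCPart

def intRoots (l : ℕ) : BCPart → Set (Fin l → ℤ)
  | short => {n | n ⬝ᵥ n = 1}
  | middle => {n | n ⬝ᵥ n = 2}
  | long => {n | ∃ m : Fin l → ℤ, m ⬝ᵥ m = 1 ∧ (2 : ℤ) • m = n}

def cartanDvd (l : ℕ) : BCPart → BCPart → ℤ
  | middle, short => 2
  | long, short => 4
  -- in `BC₂` all coordinates of a middle root are odd
  | middle, middle => if l = 2 then 2 else 1
  | long, middle => 2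
  | long, long => 2
  | _, _ => 1

lemma dotProduct_self_ne_zero {P : BCPart} {n : Fin l → ℤ} (hn : n ∈ P.intRoots l) :
    n ⬝ᵥ n ≠ 0 := by
  cases P with
  | short => simp_all [intRoots]
  | middle => simp_all [intRoots]
  | long =>
    obtain ⟨m, hm, rfl⟩ := hn
    simp only [smul_dotProduct, dotProduct_smul, smul_eq_mul, hm]
    norm_num

lemma exists_cartan {Q : BCPart} {m : Fin l → ℤ} (hm : m ∈ Q.intRoots l) (n : Fin l → ℤ) :
    ∃ k : ℤ, 2 * (n ⬝ᵥ m) = k * (m ⬝ᵥ m) := by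
  cases Q with
  | short => exact ⟨2 * (n ⬝ᵥ m), by simp_all [intRoots]⟩
  | middle => exact ⟨n ⬝ᵥ m, by simp_all [intRoots, mul_comm]⟩
  | long =>
    obtain ⟨m, hm, rfl⟩ := hm
    exact ⟨n ⬝ᵥ m, by simp only [smul_dotProduct, dotProduct_smul, smul_eq_mul, hm]; ring⟩

lemma cartanDvd_dvd {P Q : BCPart} {n m : Fin l → ℤ} (hn : n ∈ P.intRoots l)
    (hm : m ∈ Q.intRoots l) {k : ℤ} (hk : 2 * (n ⬝ᵥ m) = k * (m ⬝ᵥ m)) : cartanDvd l P Q ∣ k := by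
  cases P <;> cases Q <;> simp only [cartanDvd, one_dvd] <;>
    simp only [intRoots, Set.mem_ofPred_eq] at hn hm
  · exact ⟨n ⬝ᵥ m, by simp_all⟩
  · split_ifs with hl
    · subst hl
      obtain ⟨c, hc⟩ := two_dvd_dotProduct_of_dotProduct_self_eq_two hn hm
      rw [hm] at hk
      exact ⟨c, by linarith⟩
    · exact one_dvd k
  all_goals
    obtain ⟨n, -, rfl⟩ := hn
    try obtain ⟨m, hm, rfl⟩ := hm
    simp only [smul_dotProduct, dotProduct_smul, smul_eq_mul, hm] at hk
    exact ⟨n ⬝ᵥ m, by linarith⟩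

lemma sub_smul_mem_intRoots {P Q : BCPart} {n m : Fin l → ℤ} (hn : n ∈ P.intRoots l)
    (hm : m ∈ Q.intRoots l) {k : ℤ} (hk : 2 * (n ⬝ᵥ m) = k * (m ⬝ᵥ m)) :
    n - k • m ∈ P.intRoots l := by
  cases P with
  | short => simpa only [intRoots, Set.mem_ofPred_eq, dotProduct_sub_smul_self hk] using hn
  | middle => simpa only [intRoots, Set.mem_ofPred_eq, dotProduct_sub_smul_self hk] using hn
  | long =>
    obtain ⟨c, rfl⟩ : (2 : ℤ) ∣ k :=
      (show (2 : ℤ) ∣ cartanDvd l long Q by cases Q <;> norm_num [cartanDvd]).trans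
        (cartanDvd_dvd hn hm hk)
    obtain ⟨n, hn, rfl⟩ := hn
    refine ⟨n - c • m, ?_, by rw [smul_sub, mul_smul]⟩
    simp only [smul_dotProduct, smul_eq_mul] at hk
    rw [dotProduct_sub_smul_self (by linarith), hn]

end BCPart

lemma BCs_eq_image : BCs l = embFin l '' BCPart.short.intRoots l := by
  ext x
  simp only [BCs, BCPart.intRoots, Set.mem_iUnion, Set.mem_insert_iff, Set.mem_singleton_iff,
    Set.mem_image, Set.mem_ofPred_eq]
  constructor
  · rintro ⟨i, rfl | rfl⟩
    · exact ⟨Pi.single i 1, by simp, by simp [embFin_single]⟩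
    · exact ⟨Pi.single i (-1), by simp, by simp [embFin_single]⟩
  · rintro ⟨n, hn, rfl⟩
    obtain ⟨i, hi | hi, hn⟩ := exists_eq_single_of_dotProduct_self_eq_one hn <;>
      exact ⟨i, by rw [hn]; simp [hi, embFin_single]⟩

lemma BCm_eq_image : BCm l = embFin l '' BCPart.middle.intRoots l := by
  ext x
  simp only [BCm, BCPart.intRoots, Set.mem_iUnion, Set.mem_insert_iff, Set.mem_singleton_iff,
    Set.mem_image, Set.mem_ofPred_eq]
  constructor
  · rintro ⟨i, j, hij, rfl | rfl | rfl⟩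
    · exact ⟨Pi.single i 1 + Pi.single j 1, by simp [hij, hij.symm], by simp [embFin_single]⟩
    · exact ⟨Pi.single i 1 + Pi.single j (-1), by simp [hij, hij.symm],
        by simp [embFin_single, sub_eq_add_neg]⟩
    · exact ⟨Pi.single i (-1) + Pi.single j (-1), by simp [hij, hij.symm],
        by simp [embFin_single, sub_eq_add_neg]⟩
  · rintro ⟨n, hn, rfl⟩
    obtain ⟨i, j, hij, hi | hi, hj | hj, hn⟩ :=
      exists_eq_single_add_single_of_dotProduct_self_eq_two hn <;> rw [hn]
    · exact ⟨i, j, hij, by simp [hi, hj, embFin_single]⟩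
    · exact ⟨i, j, hij, by simp [hi, hj, embFin_single, sub_eq_add_neg]⟩
    · exact ⟨j, i, hij.symm, by simp [hi, hj, embFin_single, sub_eq_add_neg, add_comm]⟩
    · exact ⟨i, j, hij, by simp [hi, hj, embFin_single, sub_eq_add_neg]⟩

lemma BCl_eq_image : BCl l = embFin l '' BCPart.long.intRoots l := by
  ext x
  simp only [BCl, BCPart.intRoots, Set.mem_iUnion, Set.mem_insert_iff, Set.mem_singleton_iff,
    Set.mem_image, Set.mem_ofPred_eq]
  constructor
  · rintro ⟨i, rfl | rfl⟩
    · exact ⟨_, ⟨Pi.single i 1, by simp, rfl⟩, by rw [map_zsmul, embFin_single]; module⟩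
    · exact ⟨_, ⟨Pi.single i (-1), by simp, rfl⟩, by rw [map_zsmul, embFin_single]; module⟩
  · rintro ⟨_, ⟨n, hn, rfl⟩, rfl⟩
    obtain ⟨i, hi | hi, hn⟩ := exists_eq_single_of_dotProduct_self_eq_one hn <;>
      rw [hn, map_zsmul, embFin_single, hi]
    · exact ⟨i, .inl (by module)⟩
    · exact ⟨i, .inr (by module)⟩

def intPoints (l : ℕ) : AddSubgroup (V l) :=
  AddSubgroup.pi Set.univ fun _ => (Int.castAddHom ℝ).range

lemma single_mem_intPoints (j : Fin (l + 2)) : (Pi.single j 1 : V l) ∈ intPoints l := by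
  intro i _
  rcases eq_or_ne i j with rfl | h
  · exact ⟨1, by simp⟩
  · exact ⟨0, by simp [h]⟩

lemma embFin_add_embRad_mem_intPoints (n : Fin l → ℤ) (p : ℤ × ℤ) :
    embFin l n + embRad l p ∈ intPoints l := by
  rw [embFin_apply]
  exact add_mem (sum_mem fun i _ => zsmul_mem (single_mem_intPoints _) _)
    (add_mem (zsmul_mem (single_mem_intPoints _) _) (zsmul_mem (single_mem_intPoints _) _))

lemma isolated_of_subset_intPoints {R : Set (V l)} (hR : R ⊆ intPoints l) :
    ∀ x ∈ R, ∃ ε > 0, ∀ y ∈ R, ‖x - y‖ < ε → y = x := by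
  refine fun x hx => ⟨1, one_pos, fun y hy hxy => funext fun j => ?_⟩
  obtain ⟨a, ha⟩ := hR hx j (Set.mem_univ j)
  obtain ⟨b, hb⟩ := hR hy j (Set.mem_univ j)
  have hab : |a - b| < 1 := by
    have := (norm_le_pi_norm (x - y) j).trans_lt hxy
    simp only [Pi.sub_apply, Real.norm_eq_abs, ← ha, ← hb, Int.coe_castAddHom] at this
    exact_mod_cast this
  rw [abs_lt] at hab
  simp [← ha, ← hb, show a = b by omega]

lemma span_eq_top_of_mem {R : Set (V l)} (hε : ∀ i, εv l i ∈ Submodule.span ℝ R)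
    (ha : av l ∈ Submodule.span ℝ R) (hb : bv l ∈ Submodule.span ℝ R) :
    Submodule.span ℝ R = ⊤ := by
  refine eq_top_iff.2 ((Pi.basisFun ℝ (Fin (l + 2))).span_eq.ge.trans (Submodule.span_le.2 ?_))
  rintro _ ⟨j, rfl⟩
  rw [Pi.basisFun_apply]
  refine Fin.addCases (fun i => hε i) (fun t => ?_) j
  fin_cases t
  exacts [ha, hb]

lemma irreducible_of_εv_mem {R : Set (V l)} (hR : ∀ α ∈ R, Iform l α α ≠ 0)
    (hε : ∀ i, εv l i ∈ R) (hεε : ∀ i j, i ≠ j → εv l i + εv l j ∈ R) :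
    ∀ R1 R2 : Set (V l), R1 ∪ R2 = R →
      (∀ x ∈ R1, ∀ y ∈ R2, Iform l x y = 0) → R1 = ∅ ∨ R2 = ∅ := by
  intro R1 R2 hR12 horth
  have hcoord : ∀ x ∈ R, ∃ i, x (Fin.castAdd 2 i) ≠ 0 := by
    intro x hx
    by_contra! h
    exact hR x hx (Finset.sum_eq_zero fun i _ => by rw [h i, zero_mul])
  -- `x ∈ R1` forces `ε_i ∈ R1`, `y ∈ R2` forces `ε_j ∈ R2`, and a root pairing nontrivially
  -- with both `ε_i` and `ε_j` fits in neither part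
  by_contra! ⟨⟨x, hx⟩, ⟨y, hy⟩⟩
  obtain ⟨i, hi⟩ := hcoord x (hR12 ▸ Or.inl hx)
  obtain ⟨j, hj⟩ := hcoord y (hR12 ▸ Or.inr hy)
  have hεi : εv l i ∈ R1 := (hR12 ▸ hε i : εv l i ∈ R1 ∪ R2).resolve_right fun h =>
    hi ((Iform_εv_right x i).symm.trans (horth x hx _ h))
  have hεj : εv l j ∈ R2 := (hR12 ▸ hε j : εv l j ∈ R1 ∪ R2).resolve_left fun h =>
    hj ((Iform_εv_right y j).symm.trans ((Iform_comm _ _).trans (horth _ h y hy)))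
  obtain ⟨z, hz, hzi, hzj⟩ : ∃ z ∈ R, z (Fin.castAdd 2 i) ≠ 0 ∧ z (Fin.castAdd 2 j) ≠ 0 := by
    rcases eq_or_ne i j with rfl | hij
    · exact ⟨εv l i, hε i, by simp [εv_castAdd], by simp [εv_castAdd]⟩
    · exact ⟨_, hεε i j hij, by simp [εv_castAdd, hij], by simp [εv_castAdd, hij.symm]⟩
  rcases (hR12 ▸ hz : z ∈ R1 ∪ R2) with h | h
  · exact hzj ((Iform_εv_right z j).symm.trans (horth z h _ hεj))
  · exact hzi ((Iform_εv_right z i).symm.trans ((Iform_comm _ _).trans (horth _ hεi z h)))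

lemma isMarking_Ga_of_mem {R : Set (V l)} {x : V l} (hx : x ∈ R) (hxa : x + av l ∈ R) :
    IsMarking l R (Ga l) := by
  have hav : av l ≠ 0 := fun h => by simpa [av] using congrFun h (Fin.natAdd l 0)
  refine ⟨Submodule.span_mono (by simp), finrank_span_singleton hav, av l, hav,
    Submodule.subset_span rfl, ?_⟩
  simpa using sub_mem (AddSubgroup.subset_closure hxa) (AddSubgroup.subset_closure hx)

lemma embRad_mem_Ga {p : ℤ × ℤ} (hp : p.2 = 0) : embRad l p ∈ Ga l := by
  rw [embRad_apply, hp, Int.cast_zero, zero_smul, add_zero]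
  exact Submodule.smul_mem _ _ (Submodule.subset_span rfl)

def bcSystem (l : ℕ) (S : BCPart → Set (ℤ × ℤ)) : Set (V l) :=
  (BCs l + embRad l '' S .short) ∪ (BCm l + embRad l '' S .middle) ∪ (BCl l + embRad l '' S .long)

section BCSystem

variable {S : BCPart → Set (ℤ × ℤ)}

lemma mem_bcSystem {x : V l} :
    x ∈ bcSystem l S ↔
      ∃ P : BCPart, ∃ n ∈ P.intRoots l, ∃ p ∈ S P, embFin l n + embRad l p = x := by
  simp only [bcSystem, BCs_eq_image, BCm_eq_image, BCl_eq_image, Set.mem_union, Set.mem_add,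
    Set.mem_image]
  constructor
  · rintro ((⟨_, ⟨n, hn, rfl⟩, _, ⟨p, hp, rfl⟩, rfl⟩ | ⟨_, ⟨n, hn, rfl⟩, _, ⟨p, hp, rfl⟩, rfl⟩) |
      ⟨_, ⟨n, hn, rfl⟩, _, ⟨p, hp, rfl⟩, rfl⟩)
    exacts [⟨.short, n, hn, p, hp, rfl⟩, ⟨.middle, n, hn, p, hp, rfl⟩, ⟨.long, n, hn, p, hp, rfl⟩]
  · rintro ⟨_ | _ | _, n, hn, p, hp, rfl⟩
    exacts [.inl (.inl ⟨_, ⟨n, hn, rfl⟩, _, ⟨p, hp, rfl⟩, rfl⟩),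
      .inl (.inr ⟨_, ⟨n, hn, rfl⟩, _, ⟨p, hp, rfl⟩, rfl⟩),
      .inr ⟨_, ⟨n, hn, rfl⟩, _, ⟨p, hp, rfl⟩, rfl⟩]

lemma εv_add_embRad_mem_bcSystem (i : Fin l) {p : ℤ × ℤ} (hp : p ∈ S .short) :
    εv l i + embRad l p ∈ bcSystem l S :=
  mem_bcSystem.2 ⟨.short, Pi.single i 1, by simp [BCPart.intRoots], p, hp,
    by rw [embFin_single, one_zsmul]⟩

lemma εv_mem_bcSystem (i : Fin l) (h0 : 0 ∈ S .short) : εv l i ∈ bcSystem l S := by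
  simpa using εv_add_embRad_mem_bcSystem i h0

lemma bcSystem_nonisotropic : ∀ α ∈ bcSystem l S, Iform l α α ≠ 0 := by
  intro α hα
  obtain ⟨P, n, hn, p, -, rfl⟩ := mem_bcSystem.1 hα
  rw [Iform_embFin_add_embRad]
  exact_mod_cast BCPart.dotProduct_self_ne_zero hn

lemma bcSystem_integral :
    ∀ α ∈ bcSystem l S, ∀ β ∈ bcSystem l S, ∃ k : ℤ, 2 * Iform l α β = k * Iform l α α := by
  intro α hα β hβ
  obtain ⟨Q, m, hm, q, -, rfl⟩ := mem_bcSystem.1 hα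
  obtain ⟨P, n, -, p, -, rfl⟩ := mem_bcSystem.1 hβ
  obtain ⟨k, hk⟩ := BCPart.exists_cartan hm n
  refine ⟨k, ?_⟩
  rw [Iform_embFin_add_embRad, Iform_embFin_add_embRad, dotProduct_comm]
  exact_mod_cast hk

lemma bcSystem_reflects (hS : ∀ P Q, ∀ p ∈ S P, ∀ q ∈ S Q, ∀ k : ℤ,
      BCPart.cartanDvd l P Q ∣ k → p - k • q ∈ S P) :
    ∀ α ∈ bcSystem l S, reflV l α '' bcSystem l S = bcSystem l S := by
  intro α hα
  refine reflV_image_eq_of_mapsTo (bcSystem_nonisotropic α hα) ?_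
  obtain ⟨Q, m, hm, q, hq, rfl⟩ := mem_bcSystem.1 hα
  intro x hx
  obtain ⟨P, n, hn, p, hp, rfl⟩ := mem_bcSystem.1 hx
  obtain ⟨k, hk⟩ := BCPart.exists_cartan hm n
  rw [reflV_embFin_add_embRad (BCPart.dotProduct_self_ne_zero hm) hk]
  exact mem_bcSystem.2 ⟨P, _, BCPart.sub_smul_mem_intRoots hn hm hk, _,
    hS P Q p hp q hq k (BCPart.cartanDvd_dvd hn hm hk), rfl⟩

theorem bcSystem_isERS (hl : 1 ≤ l) (h0 : 0 ∈ S .short) (ha : (1, 0) ∈ S .short)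
    (hb : (0, 1) ∈ S .short) (hm0 : 0 ∈ S .middle) (hS : ∀ P Q, ∀ p ∈ S P, ∀ q ∈ S Q, ∀ k : ℤ,
      BCPart.cartanDvd l P Q ∣ k → p - k • q ∈ S P) :
    IsERS l (bcSystem l S) where
  discrete := isolated_of_subset_intPoints fun x hx => by
    obtain ⟨P, n, -, p, -, rfl⟩ := mem_bcSystem.1 hx
    exact embFin_add_embRad_mem_intPoints n p
  spans := by
    have hsub {v : V l} (hv : εv l ⟨0, hl⟩ + v ∈ bcSystem l S) :
        v ∈ Submodule.span ℝ (bcSystem l S) := by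
      simpa using sub_mem (Submodule.subset_span hv)
        (Submodule.subset_span (εv_mem_bcSystem ⟨0, hl⟩ h0))
    exact span_eq_top_of_mem (fun i => Submodule.subset_span (εv_mem_bcSystem i h0))
      (hsub (by simpa [embRad_apply] using εv_add_embRad_mem_bcSystem ⟨0, hl⟩ ha))
      (hsub (by simpa [embRad_apply] using εv_add_embRad_mem_bcSystem ⟨0, hl⟩ hb))
  nonisotropic := bcSystem_nonisotropic
  integral := bcSystem_integral
  reflects := bcSystem_reflects hS
  irred := irreducible_of_εv_mem bcSystem_nonisotropic (εv_mem_bcSystem · h0)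
    fun i j hij => mem_bcSystem.2 ⟨.middle, Pi.single i 1 + Pi.single j 1,
      by simp [BCPart.intRoots, hij, hij.symm], 0, hm0, by simp [embFin_single]⟩

lemma bcSystem_isNonReduced (hl : 1 ≤ l) (h0 : 0 ∈ S .short) (h0' : 0 ∈ S .long) :
    IsNonReducedRS l (bcSystem l S) :=
  ⟨εv l ⟨0, hl⟩, εv_mem_bcSystem _ h0,
    mem_bcSystem.2 ⟨.long, _, ⟨Pi.single ⟨0, hl⟩ 1, by simp, rfl⟩, 0, h0', by
      rw [map_zsmul, embFin_single, map_zero, add_zero, one_zsmul, ← Int.cast_smul_eq_zsmul ℝ]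
      norm_num⟩⟩

lemma bcSystem_isMarking (hl : 1 ≤ l) (h0 : 0 ∈ S .short) (ha : (1, 0) ∈ S .short) :
    IsMarking l (bcSystem l S) (Ga l) :=
  isMarking_Ga_of_mem (εv_mem_bcSystem ⟨0, hl⟩ h0)
    (by simpa [embRad_apply] using εv_add_embRad_mem_bcSystem ⟨0, hl⟩ ha)

lemma mkQ_image_bcSystem_subset {S' : BCPart → Set (ℤ × ℤ)}
    (h : ∀ P, Prod.snd '' S P ⊆ Prod.snd '' S' P) :
    (Ga l).mkQ '' bcSystem l S ⊆ (Ga l).mkQ '' bcSystem l S' := by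
  rintro _ ⟨x, hx, rfl⟩
  obtain ⟨P, n, hn, p, hp, rfl⟩ := mem_bcSystem.1 hx
  obtain ⟨p', hp', hpp'⟩ := h P ⟨p, hp, rfl⟩
  refine ⟨_, mem_bcSystem.2 ⟨P, n, hn, p', hp', rfl⟩, ?_⟩
  rw [Submodule.mkQ_apply, Submodule.mkQ_apply, Submodule.Quotient.eq, add_sub_add_left_eq_sub,
    ← map_sub]
  exact embRad_mem_Ga (by simp [hpp'])

lemma mkQ_image_bcSystem_congr {S' : BCPart → Set (ℤ × ℤ)}
    (h : ∀ P, Prod.snd '' S P = Prod.snd '' S' P) :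
    (Ga l).mkQ '' bcSystem l S = (Ga l).mkQ '' bcSystem l S' :=
  (mkQ_image_bcSystem_subset fun P => (h P).le).antisymm
    (mkQ_image_bcSystem_subset fun P => (h P).ge)

end BCSystem

lemma Zb_eq_image (k : ℤ) : Zb l k = embRad l '' {p | p.1 = 0 ∧ k ∣ p.2} := by
  ext x
  simp only [Zb, Zv, Set.mem_image, Set.mem_ofPred_eq, embRad_apply, Prod.exists]
  constructor
  · rintro ⟨n, rfl⟩
    exact ⟨0, k * n, ⟨rfl, dvd_mul_right k n⟩, by simp⟩
  · rintro ⟨_, _, ⟨rfl, n, rfl⟩, rfl⟩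
    exact ⟨n, by simp⟩

lemma Za_add_Zb_eq_image (k k' : ℤ) :
    Za l k + Zb l k' = embRad l '' {p | k ∣ p.1 ∧ k' ∣ p.2} := by
  ext x
  simp only [Za, Zb, Zv, Set.mem_add, Set.mem_image, Set.mem_ofPred_eq, embRad_apply,
    Prod.exists]
  constructor
  · rintro ⟨_, ⟨m, rfl⟩, _, ⟨n, rfl⟩, rfl⟩
    exact ⟨k * m, k' * n, ⟨dvd_mul_right k m, dvd_mul_right k' n⟩, rfl⟩
  · rintro ⟨_, _, ⟨⟨m, rfl⟩, n, rfl⟩, rfl⟩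
    exact ⟨_, ⟨m, rfl⟩, _, ⟨n, rfl⟩, rfl⟩

lemma Lset_zero_eq_image : Lset l 0 0 1 1 = embRad l '' {p | 2 ∣ p.1 * p.2} := by
  ext x
  simp [Lset, embRad_apply, eq_comm]

lemma diaL_eq_image : diaL l = embRad l '' {p | 4 ∣ 2 * p.1 - p.2} := by
  ext x
  simp only [diaL, Set.mem_image, Set.mem_ofPred_eq, embRad_apply, Prod.exists]
  constructor
  · rintro ⟨m, n, hmn, rfl⟩
    exact ⟨m, 2 * n, by omega, rfl⟩
  · rintro ⟨m, t, hmt, rfl⟩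
    exact ⟨m, t / 2, by omega, by rw [Int.mul_ediv_cancel' (by omega)]⟩

def affCoeffs (X : AffType) : BCPart → Set (ℤ × ℤ)
  | .short => {p | p.1 = 0}
  | .middle => {p | p.1 = 0 ∧ tfm X ∣ p.2}
  | .long => {p | p.1 = 0 ∧ tfl X ∣ p.2}

def bbCoeffs : BCPart → Set (ℤ × ℤ)
  | .short => Set.univ
  | .middle => {p | 2 ∣ p.1 * p.2}
  | .long => {p | 2 ∣ p.1 ∧ 2 ∣ p.2}

/-- `{ma + 2nb : m ≡ n mod 2}` is `{ma + tb : 4 ∣ 2m - t}`. -/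
def diaCoeffs : BCPart → Set (ℤ × ℤ)
  | .short => Set.univ
  | .middle => {p | 2 ∣ p.2}
  | .long => {p | 4 ∣ 2 * p.1 - p.2}

lemma Aff_eq_bcSystem (X : AffType) : Aff l X = bcSystem l (affCoeffs X) := by
  simp [Aff, AffS, AffM, AffL, bcSystem, affCoeffs, Zb_eq_image]

lemma BB2star_eq_bcSystem : BB2star l = bcSystem l bbCoeffs := by
  simp [BB2star, bcSystem, bbCoeffs, add_assoc, Za_add_Zb_eq_image, Lset_zero_eq_image]

lemma CvC2dia_eq_bcSystem : CvC2dia l = bcSystem l diaCoeffs := by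
  simp [CvC2dia, AffS, AffM, bcSystem, diaCoeffs, add_assoc, add_comm (Zb l _), Za_add_Zb_eq_image,
    diaL_eq_image, tfm]

lemma bbCoeffs_sub_smul_mem (hl : l = 2) : ∀ P Q, ∀ p ∈ bbCoeffs P, ∀ q ∈ bbCoeffs Q, ∀ k : ℤ,
    BCPart.cartanDvd l P Q ∣ k → p - k • q ∈ bbCoeffs P := by
  subst hl
  intro P Q p hp q hq k hk
  have hkq (hP : P ≠ .short) : 2 ∣ k * q.1 ∧ 2 ∣ k * q.2 := by
    have : 2 ∣ k ∨ (2 ∣ q.1 ∧ 2 ∣ q.2) := by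
      cases P <;> cases Q <;> simp_all [BCPart.cartanDvd, bbCoeffs]
      omega
    exact this.elim (fun h => ⟨h.mul_right _, h.mul_right _⟩)
      fun h => ⟨h.1.mul_left _, h.2.mul_left _⟩
  cases P with
  | short => trivial
  | middle =>
    obtain ⟨h1, h2⟩ := hkq (by simp)
    simp only [bbCoeffs, Set.mem_ofPred_eq, Int.prime_two.dvd_mul, Prod.fst_sub, Prod.snd_sub,
      Prod.smul_fst, Prod.smul_snd, smul_eq_mul] at hp ⊢
    exact hp.imp (dvd_sub · h1) (dvd_sub · h2)
  | long =>
    obtain ⟨h1, h2⟩ := hkq (by simp)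
    exact ⟨dvd_sub hp.1 h1, dvd_sub hp.2 h2⟩

lemma diaCoeffs_sub_smul_mem : ∀ P Q, ∀ p ∈ diaCoeffs P, ∀ q ∈ diaCoeffs Q, ∀ k : ℤ,
    BCPart.cartanDvd l P Q ∣ k → p - k • q ∈ diaCoeffs P := by
  rintro (_ | _ | _) (_ | _ | _) p hp q hq k hk <;>
    simp only [diaCoeffs, BCPart.cartanDvd, Set.mem_univ, Set.mem_ofPred_eq, Prod.fst_sub,
      Prod.snd_sub, Prod.smul_fst, Prod.smul_snd, smul_eq_mul] at hp hq hk ⊢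
  · exact dvd_sub hp (hk.mul_right _)
  · exact dvd_sub hp (hq.mul_left _)
  · exact dvd_sub hp ((show 2 ∣ q.2 by omega).mul_left _)
  all_goals
    rw [show 2 * (p.1 - k * q.1) - (p.2 - k * q.2) = (2 * p.1 - p.2) - k * (2 * q.1 - q.2) by ring]
    refine dvd_sub hp ?_
  · exact hk.mul_right _
  · obtain ⟨c, rfl⟩ := hk
    obtain ⟨d, hd⟩ := hq
    exact ⟨c * (q.1 - d), by rw [hd]; ring⟩
  · exact hq.mul_left _

lemma snd_image_bbCoeffs (P : BCPart) :
    Prod.snd '' bbCoeffs P = Prod.snd '' affCoeffs .BBv P := by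
  cases P <;> ext t <;> simp [bbCoeffs, affCoeffs, tfm, tfl]
  · exact ⟨0, by simp⟩
  · exact fun _ => ⟨0, by simp⟩

lemma snd_image_diaCoeffs (P : BCPart) :
    Prod.snd '' diaCoeffs P = Prod.snd '' affCoeffs .CvC P := by
  cases P <;> ext t <;> simp [diaCoeffs, affCoeffs, tfm, tfl]
  constructor
  · rintro ⟨a, h⟩
    omega
  · rintro ⟨c, rfl⟩
    exact ⟨c, by simp⟩

end

/-- **Well-definedness of the isolated system `BB_2^{∨(2)∗}` and of the ◇-type system
`C^∨C_l^{(2)◇}`.** -/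
theorem isolated_and_diamond_well_defined {l : ℕ} (hl : 1 ≤ l) :
    (l = 2 →
      IsERS l (BB2star l) ∧ IsNonReducedRS l (BB2star l) ∧
        IsMarking l (BB2star l) (Ga l) ∧
        (Ga l).mkQ '' BB2star l = (Ga l).mkQ '' Aff l .BBv) ∧
    (IsERS l (CvC2dia l) ∧ IsNonReducedRS l (CvC2dia l) ∧
      IsMarking l (CvC2dia l) (Ga l) ∧
      (Ga l).mkQ '' CvC2dia l = (Ga l).mkQ '' Aff l .CvC) := by
  rw [BB2star_eq_bcSystem, CvC2dia_eq_bcSystem, Aff_eq_bcSystem, Aff_eq_bcSystem]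
  refine ⟨fun hl2 => ⟨?_, ?_, ?_, ?_⟩, ?_, ?_, ?_, ?_⟩
  · exact bcSystem_isERS hl (Set.mem_univ _) (Set.mem_univ _) (Set.mem_univ _)
      (by simp [bbCoeffs]) (bbCoeffs_sub_smul_mem hl2)
  · exact bcSystem_isNonReduced hl (Set.mem_univ _) (by simp [bbCoeffs])
  · exact bcSystem_isMarking hl (Set.mem_univ _) (Set.mem_univ _)
  · exact mkQ_image_bcSystem_congr snd_image_bbCoeffs
  · exact bcSystem_isERS hl (Set.mem_univ _) (Set.mem_univ _) (Set.mem_univ _)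
      (by simp [diaCoeffs]) diaCoeffs_sub_smul_mem
  · exact bcSystem_isNonReduced hl (Set.mem_univ _) (by simp [diaCoeffs])
  · exact bcSystem_isMarking hl (Set.mem_univ _) (Set.mem_univ _)
  · exact mkQ_image_bcSystem_congr snd_image_diaCoeffs
end
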